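/- arXiv:1610.04274 — 4 statements merged into one kernel-verified Lean document; each statement's English description precedes it below -/
import Mathlib

section
/- Cluster-and-combine is bounded above by combine-and-cluster: for every finite set X with distance-interval data (d̲, d̄) and α ∈ [0,1], and all x, x' ∈ X, u^CL(x,x') ≤ u^CO(x,x'). -/
/-- The cost of a chain (list of nodes): maximum dissimilarity over consecutive links. -/
def chainCost {X : Type*} (d : X → X → ℝ) : List X → ℝ
  | [] => 0
  | [_] => 0
  | a :: b :: l => max (d a b) (chainCost d (b :: l))

/-- The minimum chain cost between `x` and `x'`: infimum of costs of chains from `x` to `x'`. -/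
noncomputable def minChainCost {X : Type*} (d : X → X → ℝ) (x x' : X) : ℝ :=
  sInf { c | ∃ l : List X, l.head? = some x ∧ l.getLast? = some x' ∧ chainCost d l = c }

/-- Combine-and-cluster ultrametric. -/
noncomputable def uCO {X : Type*} (dlb dub : X → X → ℝ) (α : ℝ) : X → X → ℝ :=
  minChainCost (fun a b => α * dub a b + (1 - α) * dlb a b)

/-- Cluster-and-combine ultrametric. -/
noncomputable def uCL {X : Type*} (dlb dub : X → X → ℝ) (α : ℝ) : X → X → ℝ :=
  minChainCost (fun a b => α * minChainCost dub a b + (1 - α) * minChainCost dlb a b)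

/-!
Clustering first can only shorten links: the single-link ultrametric of a nonnegative
dissimilarity is bounded by the dissimilarity itself, so the combined ultrametrics
`α c̄ + (1 - α) c̲` are bounded by `α d̄ + (1 - α) d̲` link by link, and the minimum chain
cost is monotone in the link costs.
-/

section ChainCost

variable {X : Type*}

theorem chainCost_nonneg (d : X → X → ℝ) : ∀ l : List X, 0 ≤ chainCost d l
  | [] => le_rfl
  | [_] => le_rfl
  | _ :: b :: l => (chainCost_nonneg d (b :: l)).trans (le_max_right _ _)

theorem chainCost_mono {d d' : X → X → ℝ} (h : d ≤ d') :
    ∀ l : List X, chainCost d l ≤ chainCost d' l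
  | [] => le_rfl
  | [_] => le_rfl
  | a :: b :: l => max_le_max (h a b) (chainCost_mono h (b :: l))

theorem minChainCost_le_chainCost (d : X → X → ℝ) {x x' : X} {l : List X}
    (hx : l.head? = some x) (hx' : l.getLast? = some x') :
    minChainCost d x x' ≤ chainCost d l :=
  csInf_le ⟨0, by rintro _ ⟨l, -, -, rfl⟩; exact chainCost_nonneg d l⟩ ⟨l, hx, hx', rfl⟩

theorem le_minChainCost {d : X → X → ℝ} {x x' : X} {c : ℝ}
    (h : ∀ l : List X, l.head? = some x → l.getLast? = some x' → c ≤ chainCost d l) :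
    c ≤ minChainCost d x x' :=
  le_csInf ⟨_, [x, x'], rfl, rfl, rfl⟩ (by rintro _ ⟨l, hx, hx', rfl⟩; exact h l hx hx')

theorem minChainCost_mono : Monotone (minChainCost : (X → X → ℝ) → X → X → ℝ) :=
  fun _ _ h _ _ => le_minChainCost fun l hx hx' =>
    (minChainCost_le_chainCost _ hx hx').trans (chainCost_mono h l)

theorem minChainCost_le_self {d : X → X → ℝ} (hd : 0 ≤ d) : minChainCost d ≤ d := fun x x' =>
  (minChainCost_le_chainCost d (l := [x, x']) rfl rfl).trans_eq (max_eq_left (hd x x'))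

end ChainCost

theorem uCL_le_uCO_general {X : Type*}
    (dlb dub : X → X → ℝ)
    (hbd : ∀ x y, x ≠ y → 0 < dlb x y ∧ dlb x y ≤ dub x y)
    (hdl : ∀ x, dlb x x = 0) (hdu : ∀ x, dub x x = 0)
    (α : ℝ) (hα0 : 0 ≤ α) (hα1 : α ≤ 1) :
    ∀ x x', uCL dlb dub α x x' ≤ uCO dlb dub α x x' := by
  have hlb : 0 ≤ dlb := fun a b => by
    rcases eq_or_ne a b with rfl | hab
    · exact (hdl a).ge
    · exact (hbd a b hab).1.le
  have hub : 0 ≤ dub := fun a b => by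
    rcases eq_or_ne a b with rfl | hab
    · exact (hdu a).ge
    · exact (hbd a b hab).1.le.trans (hbd a b hab).2
  have hα : 0 ≤ 1 - α := sub_nonneg.mpr hα1
  apply minChainCost_mono
  intro a b
  beta_reduce
  gcongr
  · exact minChainCost_le_self hub a b
  · exact minChainCost_le_self hlb a b

theorem uCL_le_uCO {X : Type*} [Fintype X] [Nonempty X]
    (dlb dub : X → X → ℝ)
    (hsl : ∀ x y, dlb x y = dlb y x) (hsu : ∀ x y, dub x y = dub y x)
    (hbd : ∀ x y, x ≠ y → 0 < dlb x y ∧ dlb x y ≤ dub x y)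
    (hdl : ∀ x, dlb x x = 0) (hdu : ∀ x, dub x x = 0)
    (α : ℝ) (hα0 : 0 ≤ α) (hα1 : α ≤ 1) :
    ∀ x x', uCL dlb dub α x x' ≤ uCO dlb dub α x x' :=
  uCL_le_uCO_general dlb dub hbd hdl hdu α hα0 hα1
end

section
/- When α = 1, the combine-and-cluster and cluster-and-combine ultrametrics coincide and both equal single linkage applied to the upper bounds: u^CL(x,x') = u^CO(x,x') = c̄(x,x') for all x, x'. -/
/-!
For `α = 1` the combine-and-cluster dissimilarity is `d̄` itself, so `u^CO = c̄`, and the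
cluster-and-combine dissimilarity is `c̄`, so `u^CL` is single linkage applied to `c̄`. Single
linkage is idempotent: `c̄` is an ultrametric, and by the strong triangle inequality no chain
is cheaper for an ultrametric than its direct link.
-/

namespace minChainCost

variable {X : Type*}

def chainCosts (d : X → X → ℝ) (x x' : X) : Set ℝ :=
  { c | ∃ l : List X, l.head? = some x ∧ l.getLast? = some x' ∧ chainCost d l = c }

theorem chainCosts_nonempty (d : X → X → ℝ) (x x' : X) : (chainCosts d x x').Nonempty :=
  ⟨_, [x, x'], rfl, rfl, rfl⟩

section Nonneg

variable {d : X → X → ℝ} (hd : ∀ a b, 0 ≤ d a b)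
include hd

theorem _root_.chainCost_nonneg_s11 : ∀ l : List X, 0 ≤ chainCost d l
  | [] | [_] => le_rfl
  | a :: b :: _ => (hd a b).trans (le_max_left _ _)

theorem le_chainCost {x x' : X} {l : List X} (hx : l.head? = some x) (hx' : l.getLast? = some x') :
    minChainCost d x x' ≤ chainCost d l :=
  csInf_le ⟨0, by rintro _ ⟨l, -, -, rfl⟩; exact chainCost_nonneg_s11 hd l⟩ ⟨l, hx, hx', rfl⟩

theorem nonneg (x x' : X) : 0 ≤ minChainCost d x x' :=
  le_csInf (chainCosts_nonempty d x x') (by rintro _ ⟨l, -, -, rfl⟩; exact chainCost_nonneg_s11 hd l)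

theorem le_self (x x' : X) : minChainCost d x x' ≤ d x x' := by
  simpa [chainCost, hd x x'] using le_chainCost hd (l := [x, x']) rfl rfl

theorem self_nonpos (x : X) : minChainCost d x x ≤ 0 :=
  le_chainCost hd (l := [x]) rfl rfl

end Nonneg

theorem _root_.chainCost_append_tail (d : X → X → ℝ) :
    ∀ {l₁ : List X} (l₂ : List X) {y : X}, l₁.getLast? = some y → l₂.head? = some y →
      chainCost d (l₁ ++ l₂.tail) ≤ max (chainCost d l₁) (chainCost d l₂)
  | [], _, _, h₁, _ => by simp at h₁
  | [_], _ :: _, _, h₁, h₂ => by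
    simp only [List.getLast?_singleton, List.head?_cons, Option.some.injEq] at h₁ h₂
    subst h₁ h₂
    exact le_max_right _ _
  | a :: b :: t, l₂, y, h₁, h₂ => by
    rw [List.getLast?_cons_cons] at h₁
    calc chainCost d (a :: b :: t ++ l₂.tail)
        = max (d a b) (chainCost d (b :: t ++ l₂.tail)) := rfl
      _ ≤ max (d a b) (max (chainCost d (b :: t)) (chainCost d l₂)) :=
          max_le_max le_rfl (chainCost_append_tail d l₂ h₁ h₂)
      _ = max (chainCost d (a :: b :: t)) (chainCost d l₂) := (max_assoc _ _ _).symm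

theorem le_max {d : X → X → ℝ} (hd : ∀ a b, 0 ≤ d a b) (x y z : X) :
    minChainCost d x z ≤ max (minChainCost d x y) (minChainCost d y z) := by
  refine le_of_forall_pos_le_add fun ε hε => ?_
  obtain ⟨_, ⟨l₁, hx, hy₁, rfl⟩, hl₁⟩ := Real.lt_sInf_add_pos (chainCosts_nonempty d x y) hε
  obtain ⟨_, ⟨l₂, hy₂, hz, rfl⟩, hl₂⟩ := Real.lt_sInf_add_pos (chainCosts_nonempty d y z) hε
  have hl₁_ne : l₁ ≠ [] := by rintro rfl; simp at hx
  have head : (l₁ ++ l₂.tail).head? = some x := by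
    rw [List.head?_append_of_ne_nil _ hl₁_ne, hx]
  have last : (l₁ ++ l₂.tail).getLast? = some z := by
    match l₂, hy₂, hz with
    | [_], hy₂, hz =>
      simp only [List.head?_cons, List.getLast?_singleton, Option.some.injEq] at hy₂ hz
      simpa [← hy₂, ← hz] using hy₁
    | _ :: b :: t, _, hz =>
      rwa [List.tail_cons, List.getLast?_append_of_ne_nil _ (List.cons_ne_nil b t),
        ← List.getLast?_cons_cons]
  calc minChainCost d x z
      ≤ chainCost d (l₁ ++ l₂.tail) := le_chainCost hd head last
    _ ≤ max (chainCost d l₁) (chainCost d l₂) := chainCost_append_tail d l₂ hy₁ hy₂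
    _ ≤ max (minChainCost d x y) (minChainCost d y z) + ε := by
      rw [← max_add_add_right]
      exact max_le_max hl₁.le hl₂.le

end minChainCost

theorem le_chainCost_of_le_max {X : Type*} {u : X → X → ℝ} (hu : ∀ a, u a a ≤ 0)
    (hmax : ∀ a b c, u a c ≤ max (u a b) (u b c)) :
    ∀ {l : List X} {x z : X}, l.head? = some x → l.getLast? = some z → u x z ≤ chainCost u l
  | [], _, _, hx, _ => by simp at hx
  | [_], _, _, hx, hz => by
    simp only [List.head?_cons, List.getLast?_singleton, Option.some.injEq] at hx hz
    subst hx hz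
    exact hu _
  | a :: b :: t, _, z, hx, hz => by
    simp only [List.head?_cons, Option.some.injEq] at hx
    subst hx
    rw [List.getLast?_cons_cons] at hz
    calc u a z ≤ max (u a b) (u b z) := hmax a b z
      _ ≤ max (u a b) (chainCost u (b :: t)) :=
          max_le_max le_rfl (le_chainCost_of_le_max hu hmax rfl hz)

theorem minChainCost_minChainCost {X : Type*} {d : X → X → ℝ} (hd : ∀ a b, 0 ≤ d a b) :
    minChainCost (minChainCost d) = minChainCost d := by
  funext x x'
  refine le_antisymm (minChainCost.le_self (minChainCost.nonneg hd) x x') ?_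
  refine le_csInf (minChainCost.chainCosts_nonempty _ x x') ?_
  rintro _ ⟨l, hx, hx', rfl⟩
  exact le_chainCost_of_le_max (minChainCost.self_nonpos hd) (minChainCost.le_max hd) hx hx'

theorem alpha_one_coincide_general {X : Type*}
    (dlb dub : X → X → ℝ)
    (hbd : ∀ x y, x ≠ y → 0 < dlb x y ∧ dlb x y ≤ dub x y)
    (hdu : ∀ x, dub x x = 0)
    (α : ℝ) (hα : α = 1) :
    ∀ x x', uCL dlb dub α x x' = uCO dlb dub α x x' ∧
      uCO dlb dub α x x' = minChainCost dub x x' := by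
  subst hα
  have hdub : ∀ a b, 0 ≤ dub a b := fun a b => by
    rcases eq_or_ne a b with rfl | hab
    · exact (hdu a).ge
    · exact (hbd a b hab).1.le.trans (hbd a b hab).2
  have hCO : uCO dlb dub 1 = minChainCost dub := by
    simp only [uCO, one_mul, sub_self, zero_mul, add_zero]
  have hCL : uCL dlb dub 1 = minChainCost (minChainCost dub) := by
    simp only [uCL, one_mul, sub_self, zero_mul, add_zero]
  intro x x'
  rw [hCL, hCO, minChainCost_minChainCost hdub]
  exact ⟨rfl, rfl⟩

theorem alpha_one_coincide {X : Type*} [Fintype X] [Nonempty X]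
    (dlb dub : X → X → ℝ)
    (hsl : ∀ x y, dlb x y = dlb y x) (hsu : ∀ x y, dub x y = dub y x)
    (hbd : ∀ x y, x ≠ y → 0 < dlb x y ∧ dlb x y ≤ dub x y)
    (hdl : ∀ x, dlb x x = 0) (hdu : ∀ x, dub x x = 0)
    (α : ℝ) (hα : α = 1) :
    ∀ x x', uCL dlb dub α x x' = uCO dlb dub α x x' ∧
      uCO dlb dub α x x' = minChainCost dub x x' :=
  alpha_one_coincide_general dlb dub hbd hdu α hα
end

section
/- Combine-and-cluster satisfies the Axiom of Transformation: if φ : X → Y satisfies α d̄_X(x,x') + (1-α) d̲_X(x,x') ≥ α d̄_Y(φ(x),φ(x')) + (1-α) d̲_Y(φ(x),φ(x')) for all x, x', then u^CO_X(x,x') ≥ u^CO_Y(φ(x),φ(x')) for all x, x'. -/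
/-
The image under `φ` of a chain from `x` to `x'` is a chain from `φ x` to `φ x'`, and it is no
more expensive since `φ` does not increase any link. Hence every chain cost in `X` bounds the
infimum in `Y` from above. That infimum is a genuine one because a chain cost is either `0` or
one of the finitely many values of `d`.
-/

lemma chainCost_mem_insert_range {X : Type*} (d : X → X → ℝ) :
    ∀ l : List X, chainCost d l ∈ insert 0 (Set.range (Function.uncurry d))
  | [] | [_] => Set.mem_insert _ _
  | a :: b :: l => by
      rcases max_choice (d a b) (chainCost d (b :: l)) with h | h <;>
        simp only [chainCost, h]
      · exact Set.mem_insert_of_mem _ ⟨(a, b), rfl⟩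
      · exact chainCost_mem_insert_range d (b :: l)

lemma bddBelow_range_chainCost {X : Type*} [Finite X] (d : X → X → ℝ) :
    BddBelow (Set.range (chainCost d)) :=
  ((Set.finite_range _).insert 0).bddBelow.mono <| Set.range_subset_iff.2 <|
    chainCost_mem_insert_range d

lemma chainCost_map_le {X Y : Type*} (dX : X → X → ℝ) (dY : Y → Y → ℝ) (φ : X → Y)
    (h : ∀ a b, dY (φ a) (φ b) ≤ dX a b) :
    ∀ l : List X, chainCost dY (l.map φ) ≤ chainCost dX l
  | [] | [_] => le_rfl
  | a :: b :: l => max_le_max (h a b) (chainCost_map_le dX dY φ h (b :: l))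

lemma minChainCost_map_le {X Y : Type*} [Finite Y] (dX : X → X → ℝ) (dY : Y → Y → ℝ)
    (φ : X → Y) (h : ∀ a b, dY (φ a) (φ b) ≤ dX a b) (x x' : X) :
    minChainCost dY (φ x) (φ x') ≤ minChainCost dX x x' := by
  refine le_csInf ⟨_, [x, x'], rfl, rfl, rfl⟩ ?_
  rintro _ ⟨l, hhead, hlast, rfl⟩
  have hbdd : BddBelow { c | ∃ l : List Y, l.head? = some (φ x) ∧
      l.getLast? = some (φ x') ∧ chainCost dY l = c } :=
    (bddBelow_range_chainCost dY).mono <| by rintro _ ⟨l, -, -, rfl⟩; exact ⟨l, rfl⟩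
  calc minChainCost dY (φ x) (φ x') ≤ chainCost dY (l.map φ) :=
        csInf_le hbdd ⟨l.map φ, by simp [hhead], by simp [hlast], rfl⟩
    _ ≤ chainCost dX l := chainCost_map_le dX dY φ h l

theorem uCO_axiom_transformation_general {X Y : Type*} [Fintype Y]
    (dlbX dubX : X → X → ℝ) (dlbY dubY : Y → Y → ℝ)
    (α : ℝ)
    (φ : X → Y)
    (hred : ∀ x x', α * dubY (φ x) (φ x') + (1 - α) * dlbY (φ x) (φ x') ≤
      α * dubX x x' + (1 - α) * dlbX x x') :
    ∀ x x', uCO dlbY dubY α (φ x) (φ x') ≤ uCO dlbX dubX α x x' :=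
  minChainCost_map_le _ _ φ hred

theorem uCO_axiom_transformation {X Y : Type*} [Fintype X] [Fintype Y]
    (dlbX dubX : X → X → ℝ) (dlbY dubY : Y → Y → ℝ)
    (hslX : ∀ x y, dlbX x y = dlbX y x) (hsuX : ∀ x y, dubX x y = dubX y x)
    (hbdX : ∀ x y, x ≠ y → 0 < dlbX x y ∧ dlbX x y ≤ dubX x y)
    (hdlX : ∀ x, dlbX x x = 0) (hduX : ∀ x, dubX x x = 0)
    (hslY : ∀ x y, dlbY x y = dlbY y x) (hsuY : ∀ x y, dubY x y = dubY y x)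
    (hbdY : ∀ x y, x ≠ y → 0 < dlbY x y ∧ dlbY x y ≤ dubY x y)
    (hdlY : ∀ x, dlbY x x = 0) (hduY : ∀ x, dubY x x = 0)
    (α : ℝ) (hα0 : 0 ≤ α) (hα1 : α ≤ 1)
    (φ : X → Y)
    (hred : ∀ x x', α * dubY (φ x) (φ x') + (1 - α) * dlbY (φ x) (φ x') ≤
      α * dubX x x' + (1 - α) * dlbX x x') :
    ∀ x x', uCO dlbY dubY α (φ x) (φ x') ≤ uCO dlbX dubX α x x' :=
  uCO_axiom_transformation_general dlbX dubX dlbY dubY α φ hred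
end

section
/- Four-point lemma (Fact 2): Let c̄ and c̲ be two ultrametrics on a set containing points x, x̃, x', x̃', write ā = c̄(x,x̃), b̄ = c̄(x',x̃'), ē = c̄(x,x'), f̄ = c̄(x̃,x̃'), ḡ = c̄(x,x̃'), h̄ = c̄(x̃,x') and analogously a̲,b̲,e̲,f̲,g̲,h̲ for c̲. If α ā + (1-α) a̲ ≤ δ, α b̄ + (1-α) b̲ ≤ δ, and α ē + (1-α) f̲ ≤ δ, then at least one of α ē + (1-α) e̲ ≤ δ, α f̄ + (1-α) f̲ ≤ δ, α ḡ + (1-α) g̲ ≤ δ, α h̄ + (1-α) h̲ ≤ δ holds. -/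
/-!
Write φ(p, q) = α p + (1 - α) q; it is monotone and φ(max p₁ p₂, min q₁ q₂) is at most
max (φ(p₁, q₁), φ(p₂, q₂)), so the pairs with φ ≤ δ are closed under that operation.
Compare a̲ and b̲ with f̲. The strong triangle inequality gives e̲ ≤ f̲ when both are below f̲;
ḡ ≤ max(ē, b̄) and g̲ ≤ min(f̲, b̲) when a̲ ≤ f̲ ≤ b̲; symmetrically for (h̄, h̲) when b̲ ≤ f̲ ≤ a̲;
and f̄ ≤ max(ā, ē, b̄), f̲ ≤ min(a̲, f̲, b̲) when f̲ is below both. In each case the target pair is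
dominated by the hypothesis pairs (ā, a̲), (ē, f̲), (b̄, b̲).
-/

theorem le_max_max_of_forall_le_max {X β : Type*} [LinearOrder β] {d : X → X → β}
    (htri : ∀ a b c, d a c ≤ max (d a b) (d b c)) (a b b' c : X) :
    d a c ≤ max (d a b) (max (d b b') (d b' c)) :=
  (htri a b c).trans (max_le_max le_rfl (htri b b' c))

section ConvexCombination

variable {α : ℝ}

theorem convex_comb_le_convex_comb (hα0 : 0 ≤ α) (hα1 : α ≤ 1) {p q p' q' : ℝ}
    (hp : p ≤ p') (hq : q ≤ q') :
    α * p + (1 - α) * q ≤ α * p' + (1 - α) * q' :=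
  add_le_add (mul_le_mul_of_nonneg_left hp hα0) (mul_le_mul_of_nonneg_left hq (sub_nonneg.2 hα1))

theorem convex_comb_max_min_le (hα0 : 0 ≤ α) (hα1 : α ≤ 1) (p₁ p₂ q₁ q₂ : ℝ) :
    α * max p₁ p₂ + (1 - α) * min q₁ q₂ ≤
      max (α * p₁ + (1 - α) * q₁) (α * p₂ + (1 - α) * q₂) := by
  rcases le_total p₁ p₂ with hp | hp
  · rw [max_eq_right hp]
    exact (convex_comb_le_convex_comb hα0 hα1 le_rfl (min_le_right _ _)).trans (le_max_right _ _)
  · rw [max_eq_left hp]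
    exact (convex_comb_le_convex_comb hα0 hα1 le_rfl (min_le_left _ _)).trans (le_max_left _ _)

theorem convex_comb_le_of_le_max_of_le_min (hα0 : 0 ≤ α) (hα1 : α ≤ 1) {δ p q p₁ p₂ q₁ q₂ : ℝ}
    (hp : p ≤ max p₁ p₂) (hq : q ≤ min q₁ q₂)
    (h₁ : α * p₁ + (1 - α) * q₁ ≤ δ) (h₂ : α * p₂ + (1 - α) * q₂ ≤ δ) :
    α * p + (1 - α) * q ≤ δ :=
  calc α * p + (1 - α) * q ≤ α * max p₁ p₂ + (1 - α) * min q₁ q₂ :=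
        convex_comb_le_convex_comb hα0 hα1 hp hq
    _ ≤ max (α * p₁ + (1 - α) * q₁) (α * p₂ + (1 - α) * q₂) :=
        convex_comb_max_min_le hα0 hα1 p₁ p₂ q₁ q₂
    _ ≤ δ := max_le h₁ h₂

end ConvexCombination

theorem four_point_lemma_general {X : Type*}
    (cbar clb : X → X → ℝ)
    (hsu : ∀ x y, cbar x y = cbar y x) (hsl : ∀ x y, clb x y = clb y x)
    (htu : ∀ a b c, cbar a c ≤ max (cbar a b) (cbar b c))
    (htl : ∀ a b c, clb a c ≤ max (clb a b) (clb b c))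
    (x xt x' xt' : X)
    (α : ℝ) (hα0 : 0 ≤ α) (hα1 : α ≤ 1)
    (δ : ℝ)
    (ha : α * cbar x xt + (1 - α) * clb x xt ≤ δ)
    (hb : α * cbar x' xt' + (1 - α) * clb x' xt' ≤ δ)
    (hef : α * cbar x x' + (1 - α) * clb xt xt' ≤ δ) :
    α * cbar x x' + (1 - α) * clb x x' ≤ δ ∨
    α * cbar xt xt' + (1 - α) * clb xt xt' ≤ δ ∨
    α * cbar x xt' + (1 - α) * clb x xt' ≤ δ ∨
    α * cbar xt x' + (1 - α) * clb xt x' ≤ δ := by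
  have he_lb : clb x x' ≤ max (clb x xt) (max (clb xt xt') (clb x' xt')) := by
    simpa only [hsl xt' x'] using le_max_max_of_forall_le_max htl x xt xt' x'
  have hf_ub : cbar xt xt' ≤ max (cbar x xt) (max (cbar x x') (cbar x' xt')) := by
    simpa only [hsu xt x] using le_max_max_of_forall_le_max htu xt x x' xt'
  have hh_lb : clb xt x' ≤ max (clb xt xt') (clb x' xt') := by
    simpa only [hsl xt' x'] using htl xt xt' x'
  have hh_ub : cbar xt x' ≤ max (cbar x xt) (cbar x x') := by
    simpa only [hsu xt x] using htu xt x x'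
  have heb : α * max (cbar x x') (cbar x' xt') + (1 - α) * min (clb xt xt') (clb x' xt') ≤ δ :=
    convex_comb_le_of_le_max_of_le_min hα0 hα1 le_rfl le_rfl hef hb
  rcases le_total (clb x xt) (clb xt xt') with hA | hA <;>
    rcases le_total (clb x' xt') (clb xt xt') with hB | hB
  · exact Or.inl <| (convex_comb_le_convex_comb hα0 hα1 le_rfl
      (he_lb.trans (max_le hA (max_le le_rfl hB)))).trans hef
  · have hgf : clb x xt' ≤ clb xt xt' := (htl x xt xt').trans (max_le hA le_rfl)
    exact Or.inr <| Or.inr <| Or.inl <| convex_comb_le_of_le_max_of_le_min hα0 hα1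
      (htu x x' xt') (le_min hgf (hgf.trans hB)) hef hb
  · have hhf : clb xt x' ≤ clb xt xt' := hh_lb.trans (max_le le_rfl hB)
    exact Or.inr <| Or.inr <| Or.inr <| convex_comb_le_of_le_max_of_le_min hα0 hα1
      hh_ub (le_min (hhf.trans hA) hhf) ha hef
  · exact Or.inr <| Or.inl <| convex_comb_le_of_le_max_of_le_min hα0 hα1
      hf_ub (le_min hA (le_min le_rfl hB)) ha heb

theorem four_point_lemma {X : Type*}
    (cbar clb : X → X → ℝ)
    (hsu : ∀ x y, cbar x y = cbar y x) (hsl : ∀ x y, clb x y = clb y x)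
    (htu : ∀ a b c, cbar a c ≤ max (cbar a b) (cbar b c))
    (htl : ∀ a b c, clb a c ≤ max (clb a b) (clb b c))
    (x xt x' xt' : X)
    (α : ℝ) (hα0 : 0 ≤ α) (hα1 : α ≤ 1)
    (δ : ℝ) (hδ : 0 ≤ δ)
    (ha : α * cbar x xt + (1 - α) * clb x xt ≤ δ)
    (hb : α * cbar x' xt' + (1 - α) * clb x' xt' ≤ δ)
    (hef : α * cbar x x' + (1 - α) * clb xt xt' ≤ δ) :
    α * cbar x x' + (1 - α) * clb x x' ≤ δ ∨
    α * cbar xt xt' + (1 - α) * clb xt xt' ≤ δ ∨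
    α * cbar x xt' + (1 - α) * clb x xt' ≤ δ ∨
    α * cbar xt x' + (1 - α) * clb xt x' ≤ δ :=
  four_point_lemma_general cbar clb hsu hsl htu htl x xt x' xt' α hα0 hα1 δ ha hb hef
end
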